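/- Let n ≥ 4. In the root system of type D_n, the minimum, over simple roots α_k ∈ Π (1 ≤ k ≤ n), of the resonant codimension of Π ∖ {α_k} equals 2n − 2. -/

import Mathlib

/-!
Indices run from `0` to `n - 1`, so `simpleRoot 0 = e 0 - e 1` is the end node of the diagram.

If a linear form vanishes on `Π ∖ {α_k}`, every positive root on which it does not vanish is
counted by the resonant codimension. For the form we take a multiple of the fundamental coweight
`ω_k`. For `k ≤ n - 3` it is the indicator of the first `k + 1` coordinates, and the roots
`e 0 ± e j` (when `ω_k (e j) = 0`) and `e j ± e (n - 1)` (otherwise) give `2n - 2` survivors.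
For `k ≥ n - 2` (the two spin nodes) all coordinates of `ω_k` are `±1`, so for every pair
`i < j` one of `e i ± e j` survives, and `n(n - 1)/2 ≥ 2n - 2` as `n ≥ 4`.

Conversely, for `k = 0` every root `e i ± e j` with `1 ≤ i < j` is a combination of
`α_1, …, α_(n-1)`, so only the `2n - 2` roots `e 0 ± e j` are left outside the span.
-/

section ResonantCodim

variable (K : Type*) {V : Type*} [Semiring K] [AddCommMonoid V] [Module K V]

noncomputable def resonantCodim (S P : Set V) : ℕ :=
  {β ∈ S | β ∉ Submodule.span K P}.ncard

variable {K}

theorem ncard_map_ne_zero_le_resonantCodim {S P : Set V} (hS : S.Finite) (f : V →ₗ[K] K)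
    (hf : ∀ v ∈ P, f v = 0) : {β ∈ S | f β ≠ 0}.ncard ≤ resonantCodim K S P :=
  Set.ncard_le_ncard
    (fun _ ⟨hβS, hβ⟩ =>
      ⟨hβS, fun hmem => hβ ((Submodule.span_le (p := LinearMap.ker f)).2 hf hmem)⟩)
    (hS.subset fun _ h => h.1)

end ResonantCodim

namespace TypeD

variable {n : ℕ}

def posRoot (i j : Fin n) : Bool → Fin n → ℝ
  | false => Pi.single i 1 - Pi.single j 1
  | true => Pi.single i 1 + Pi.single j 1

theorem posRoot_apply_left {i j : Fin n} (hij : i ≠ j) (b : Bool) : posRoot i j b i = 1 := by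
  cases b <;> simp [posRoot, hij]

theorem posRoot_apply_right {i j : Fin n} (hij : i ≠ j) (b : Bool) :
    posRoot i j b j = if b then 1 else -1 := by
  cases b <;> simp [posRoot, hij.symm]

theorem posRoot_apply_of_ne {i j x : Fin n} (hi : x ≠ i) (hj : x ≠ j) (b : Bool) :
    posRoot i j b x = 0 := by
  cases b <;> simp [posRoot, hi, hj]

theorem posRoot_inj {i j i' j' : Fin n} {b b' : Bool} (hij : i < j) (hij' : i' < j')
    (h : posRoot i j b = posRoot i' j' b') : i = i' ∧ j = j' ∧ b = b' := by
  have hi : i = i' := by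
    by_contra hne
    rcases lt_or_gt_of_ne hne with hlt | hlt
    · have := congrFun h i
      rw [posRoot_apply_left hij.ne, posRoot_apply_of_ne hne (hlt.trans hij').ne] at this
      exact one_ne_zero this
    · have := congrFun h i'
      rw [posRoot_apply_left hij'.ne, posRoot_apply_of_ne (Ne.symm hne) (hlt.trans hij).ne] at this
      exact one_ne_zero this.symm
  subst hi
  have hj : j = j' := by
    by_contra hne
    rcases lt_or_gt_of_ne hne with hlt | hlt
    · have := congrFun h j'
      rw [posRoot_apply_right hij'.ne, posRoot_apply_of_ne (hij.trans hlt).ne' (Ne.symm hne)]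
        at this
      split_ifs at this <;> norm_num at this
    · have := congrFun h j
      rw [posRoot_apply_right hij.ne, posRoot_apply_of_ne (hij'.trans hlt).ne' hne] at this
      split_ifs at this <;> norm_num at this
  subst hj
  have := congrFun h j
  rw [posRoot_apply_right hij.ne, posRoot_apply_right hij.ne] at this
  refine ⟨rfl, rfl, ?_⟩
  revert this
  cases b <;> cases b' <;> norm_num

def posRoots (n : ℕ) : Set (Fin n → ℝ) :=
  {v | ∃ i j : Fin n, i < j ∧
    (v = Pi.single i 1 - Pi.single j 1 ∨ v = Pi.single i 1 + Pi.single j 1)}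

theorem mem_posRoots {v : Fin n → ℝ} :
    v ∈ posRoots n ↔ ∃ i j b, i < j ∧ posRoot i j b = v := by
  constructor
  · rintro ⟨i, j, hij, rfl | rfl⟩
    exacts [⟨i, j, false, hij, rfl⟩, ⟨i, j, true, hij, rfl⟩]
  · rintro ⟨i, j, b, hij, rfl⟩
    cases b
    exacts [⟨i, j, hij, Or.inl rfl⟩, ⟨i, j, hij, Or.inr rfl⟩]

theorem posRoot_mem_posRoots {i j : Fin n} (hij : i < j) (b : Bool) :
    posRoot i j b ∈ posRoots n :=
  mem_posRoots.2 ⟨i, j, b, hij, rfl⟩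

theorem posRoots_finite : (posRoots n).Finite :=
  (Set.finite_range fun p : Fin n × Fin n × Bool => posRoot p.1 p.2.1 p.2.2).subset fun _ hv => by
    obtain ⟨i, j, b, -, rfl⟩ := mem_posRoots.1 hv
    exact ⟨(i, j, b), rfl⟩

def simpleRoot (k : Fin n) : Fin n → ℝ :=
  if h : (k : ℕ) + 1 < n then Pi.single k 1 - Pi.single ⟨k + 1, h⟩ 1
  else Pi.single ⟨n - 2, by omega⟩ 1 + Pi.single ⟨n - 1, by omega⟩ 1

theorem simpleRoot_of_lt {k : Fin n} (h : (k : ℕ) + 1 < n) :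
    simpleRoot k = posRoot k ⟨k + 1, h⟩ false := by
  rw [simpleRoot, dif_pos h, posRoot]

theorem simpleRoot_of_not_lt {k : Fin n} (h : ¬(k : ℕ) + 1 < n) :
    simpleRoot k = posRoot ⟨n - 2, by omega⟩ ⟨n - 1, by omega⟩ true := by
  rw [simpleRoot, dif_neg h, posRoot]

theorem simpleRoot_injective : Function.Injective (simpleRoot (n := n)) := by
  have lt_succ {k : Fin n} (h : (k : ℕ) + 1 < n) : k < ⟨k + 1, h⟩ :=
    Fin.lt_def.2 (Nat.lt_succ_self k)
  intro a b hab
  by_cases ha : (a : ℕ) + 1 < n <;> by_cases hb : (b : ℕ) + 1 < n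
  · rw [simpleRoot_of_lt ha, simpleRoot_of_lt hb] at hab
    exact (posRoot_inj (lt_succ ha) (lt_succ hb) hab).1
  · rw [simpleRoot_of_lt ha, simpleRoot_of_not_lt hb] at hab
    exact absurd (posRoot_inj (lt_succ ha) (Fin.mk_lt_mk.2 (by omega)) hab).2.2 Bool.false_ne_true
  · rw [simpleRoot_of_not_lt ha, simpleRoot_of_lt hb] at hab
    exact absurd (posRoot_inj (Fin.mk_lt_mk.2 (by omega)) (lt_succ hb) hab).2.2
      Bool.false_ne_true.symm
  · omega

theorem simpleRoot_mem_span {k t : Fin n} (h : t ≠ k) :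
    simpleRoot t ∈ Submodule.span ℝ (Set.range simpleRoot \ {simpleRoot k}) :=
  Submodule.subset_span ⟨⟨t, rfl⟩, fun h' => h (simpleRoot_injective h')⟩

theorem single_sub_single_mem_span_of_ne_zero {i j : Fin n} (hi : (i : ℕ) ≠ 0)
    (hj : (j : ℕ) ≠ 0) :
    Pi.single i 1 - Pi.single j 1 ∈
      Submodule.span ℝ (Set.range simpleRoot \ {simpleRoot ⟨0, by omega⟩}) := by
  set W := Submodule.span ℝ (Set.range simpleRoot \ {simpleRoot (⟨0, by omega⟩ : Fin n)})
  have h1 : 1 < n := by omega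
  have key : ∀ m, 1 ≤ m → ∀ hm : m < n,
      Pi.single ⟨1, h1⟩ 1 - Pi.single ⟨m, hm⟩ 1 ∈ W := by
    intro m hm1
    induction m, hm1 using Nat.le_induction with
    | base => intro; simp
    | succ m hm ih =>
      intro hm'
      have hmem : simpleRoot ⟨m, by omega⟩ ∈ W :=
        simpleRoot_mem_span (by simp only [ne_eq, Fin.mk.injEq]; omega)
      rw [simpleRoot_of_lt hm', posRoot] at hmem
      simpa using W.add_mem (ih (by omega)) hmem
  simpa using W.sub_mem (key j (by omega) j.isLt) (key i (by omega) i.isLt)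

theorem posRoot_mem_span_of_ne_zero (hn : 3 ≤ n) {i j : Fin n} (hi : (i : ℕ) ≠ 0)
    (hj : (j : ℕ) ≠ 0) (b : Bool) :
    posRoot i j b ∈
      Submodule.span ℝ (Set.range simpleRoot \ {simpleRoot ⟨0, by omega⟩}) := by
  cases b
  · exact single_sub_single_mem_span_of_ne_zero hi hj
  · have hα : simpleRoot ⟨n - 1, by omega⟩ ∈
        Submodule.span ℝ (Set.range simpleRoot \ {simpleRoot (⟨0, by omega⟩ : Fin n)}) :=
      simpleRoot_mem_span (by simp only [ne_eq, Fin.mk.injEq]; omega)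
    rw [simpleRoot_of_not_lt (k := ⟨n - 1, by omega⟩) (by simp only [not_lt]; omega)] at hα
    have hp := single_sub_single_mem_span_of_ne_zero (j := ⟨n - 2, by omega⟩) hi
      (by simp only [ne_eq]; omega)
    have hq := single_sub_single_mem_span_of_ne_zero (j := ⟨n - 1, by omega⟩) hj
      (by simp only [ne_eq]; omega)
    convert add_mem (add_mem hp hq) hα using 1
    simp only [posRoot]
    abel

theorem resonantCodim_simpleRoot_zero_le (hn : 3 ≤ n) :
    resonantCodim ℝ (posRoots n) (Set.range simpleRoot \ {simpleRoot ⟨0, by omega⟩}) ≤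
      2 * n - 2 := by
  let z : Fin n := ⟨0, by omega⟩
  let T : Finset (Fin n → ℝ) :=
    ((Finset.univ.erase z) ×ˢ Finset.univ).image fun p => posRoot z p.1 p.2
  calc resonantCodim ℝ (posRoots n) (Set.range simpleRoot \ {simpleRoot z})
      ≤ (T : Set (Fin n → ℝ)).ncard := by
        refine Set.ncard_le_ncard ?_ T.finite_toSet
        rintro v ⟨hv, hvW⟩
        obtain ⟨i, j, b, hij, rfl⟩ := mem_posRoots.1 hv
        have hi : i = z := by
          by_contra hi
          exact hvW (posRoot_mem_span_of_ne_zero hn (by simpa [Fin.ext_iff] using hi) (by omega) b)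
        subst hi
        exact Finset.mem_coe.2 (Finset.mem_image.2 ⟨(j, b), by simp [hij.ne'], rfl⟩)
    _ ≤ ((Finset.univ.erase z) ×ˢ (Finset.univ : Finset Bool)).card := by
        rw [Set.ncard_coe_finset]; exact Finset.card_image_le
    _ = 2 * n - 2 := by
        rw [Finset.card_product, Finset.card_erase_of_mem (Finset.mem_univ _), Finset.card_univ,
          Finset.card_univ, Fintype.card_fin, Fintype.card_bool]
        omega

variable (f : (Fin n → ℝ) →ₗ[ℝ] ℝ)

theorem two_mul_sub_two_le_ncard_of_isBot_of_isTop {a z : Fin n} (ha : IsBot a) (hz : IsTop z)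
    (hfa : f (Pi.single a 1) ≠ 0) (hfz : f (Pi.single z 1) = 0) :
    2 * n - 2 ≤ {β ∈ posRoots n | f β ≠ 0}.ncard := by
  have lt_of_ne_bot {j : Fin n} (hj : j ≠ a) : a < j := (ha j).lt_of_ne (Ne.symm hj)
  have lt_top_of_map {j : Fin n} (hj : f (Pi.single j 1) ≠ 0) : j < z :=
    (hz j).lt_of_ne (by rintro rfl; exact hj hfz)
  -- `f (e a ± e j) = f (e a)` if `f (e j) = 0`, and `f (e j ± e z) = f (e j)`
  let g : Fin n × Bool → Fin n → ℝ := fun p =>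
    if f (Pi.single p.1 1) = 0 then posRoot a p.1 p.2 else posRoot p.1 z p.2
  let s : Finset (Fin n × Bool) := Finset.univ.erase a ×ˢ Finset.univ
  have hs : ∀ {p}, p ∈ (s : Set (Fin n × Bool)) ↔ p.1 ≠ a := by simp [s]
  have hcard : (s : Set (Fin n × Bool)).ncard = 2 * n - 2 := by
    rw [Set.ncard_coe_finset, Finset.card_product, Finset.card_erase_of_mem (Finset.mem_univ _),
      Finset.card_univ, Finset.card_univ, Fintype.card_fin, Fintype.card_bool]
    omega
  rw [← hcard]
  refine Set.ncard_le_ncard_of_injOn g ?_ ?_ (posRoots_finite.subset fun _ h => h.1)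
  · rintro ⟨j, b⟩ hj
    by_cases hfj : f (Pi.single j 1) = 0
    · refine ⟨by simpa [g, hfj] using posRoot_mem_posRoots (lt_of_ne_bot (hs.1 hj)) b, ?_⟩
      cases b <;> simp [g, hfj, posRoot, hfa]
    · refine ⟨by simpa [g, hfj] using posRoot_mem_posRoots (lt_top_of_map hfj) b, ?_⟩
      cases b <;> simp [g, hfj, hfz, posRoot]
  · rintro ⟨j, b⟩ hj ⟨j', b'⟩ hj' h
    replace hj := lt_of_ne_bot (hs.1 hj)
    replace hj' := lt_of_ne_bot (hs.1 hj')
    by_cases hfj : f (Pi.single j 1) = 0 <;> by_cases hfj' : f (Pi.single j' 1) = 0 <;>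
      simp only [g, hfj, hfj', if_true, if_false] at h
    · obtain ⟨-, rfl, rfl⟩ := posRoot_inj hj hj' h; rfl
    · exact absurd (posRoot_inj hj (lt_top_of_map hfj') h).1 hj'.ne
    · exact absurd (posRoot_inj (lt_top_of_map hfj) hj' h).1 hj.ne'
    · obtain ⟨rfl, -, rfl⟩ := posRoot_inj (lt_top_of_map hfj) (lt_top_of_map hfj') h; rfl

theorem choose_two_le_ncard_of_forall_ne_zero (hf : ∀ i, f (Pi.single i 1) ≠ 0) :
    n.choose 2 ≤ {β ∈ posRoots n | f β ≠ 0}.ncard := by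
  -- `f (e i + e j) - f (e i - e j) = 2 f (e j) ≠ 0`, so one of the two signs survives
  let g : Fin n × Fin n → Fin n → ℝ := fun p =>
    posRoot p.1 p.2 (f (Pi.single p.1 1) + f (Pi.single p.2 1) ≠ 0)
  let s : Finset (Fin n × Fin n) := {p | p.1 < p.2}
  have hs : ∀ {p}, p ∈ (s : Set (Fin n × Fin n)) ↔ p.1 < p.2 := by simp [s]
  have hcard : (s : Set (Fin n × Fin n)).ncard = n.choose 2 := by
    rw [Set.ncard_coe_finset, Fintype.card_product_filter_lt, Fintype.card_fin]
  rw [← hcard]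
  refine Set.ncard_le_ncard_of_injOn g ?_ ?_ (posRoots_finite.subset fun _ h => h.1)
  · rintro ⟨i, j⟩ hij
    refine ⟨posRoot_mem_posRoots (hs.1 hij) _, ?_⟩
    by_cases hsum : f (Pi.single i 1) + f (Pi.single j 1) = 0
    · simp only [g, hsum, posRoot, ne_eq, not_true_eq_false, decide_false, map_sub]
      intro h
      exact hf j (by linarith)
    · simp [g, hsum, posRoot]
  · rintro ⟨i, j⟩ hij ⟨i', j'⟩ hij' h
    obtain ⟨rfl, rfl, -⟩ := posRoot_inj (hs.1 hij) (hs.1 hij') h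
    rfl

theorem linearCombination_simpleRoot (w : Fin n → ℝ) (t : Fin n) :
    Fintype.linearCombination ℝ w (simpleRoot t) =
      if h : (t : ℕ) + 1 < n then w t - w ⟨t + 1, h⟩
      else w ⟨n - 2, by omega⟩ + w ⟨n - 1, by omega⟩ := by
  unfold simpleRoot
  split_ifs <;> simp

theorem two_mul_sub_two_le_choose_two (hn : 4 ≤ n) : 2 * n - 2 ≤ n.choose 2 := by
  rw [Nat.choose_two_right, Nat.le_div_iff_mul_le two_pos]
  obtain ⟨m, rfl⟩ : ∃ m, n = m + 4 := ⟨n - 4, by omega⟩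
  rw [show 2 * (m + 4) - 2 = 2 * m + 6 by omega, show m + 4 - 1 = m + 3 by omega]
  nlinarith

-- a positive multiple of the fundamental coweight dual to `simpleRoot k`
def coweight (k : Fin n) (i : Fin n) : ℝ :=
  if (k : ℕ) + 2 < n then (if i ≤ k then 1 else 0)
  else if (i : ℕ) + 1 = n ∧ (k : ℕ) + 2 = n then -1 else 1

theorem linearCombination_coweight_simpleRoot {k t : Fin n} (h : t ≠ k) :
    Fintype.linearCombination ℝ (coweight k) (simpleRoot t) = 0 := by
  have : (t : ℕ) ≠ k := by omega
  rw [linearCombination_simpleRoot]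
  simp only [coweight, Fin.le_def]
  split_ifs <;> norm_num <;> omega

theorem two_mul_sub_two_le_resonantCodim (hn : 4 ≤ n) (k : Fin n) :
    2 * n - 2 ≤ resonantCodim ℝ (posRoots n) (Set.range simpleRoot \ {simpleRoot k}) := by
  refine le_trans ?_ <| ncard_map_ne_zero_le_resonantCodim posRoots_finite
    (Fintype.linearCombination ℝ (coweight k)) <| by
      rintro _ ⟨⟨t, rfl⟩, ht⟩
      exact linearCombination_coweight_simpleRoot (by rintro rfl; exact ht rfl)
  by_cases hk : (k : ℕ) + 2 < n
  · refine two_mul_sub_two_le_ncard_of_isBot_of_isTop _ (a := ⟨0, by omega⟩)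
      (z := ⟨n - 1, by omega⟩) (fun j => Fin.le_def.2 (Nat.zero_le _))
      (fun j => Fin.le_def.2 (Nat.le_sub_one_of_lt j.isLt)) ?_ ?_
    · simp [coweight, hk, Fin.le_def]
    · rw [Fintype.linearCombination_apply_single, coweight, if_pos hk,
        if_neg (by rw [Fin.le_def]; dsimp only; omega), smul_zero]
  · refine (two_mul_sub_two_le_choose_two hn).trans <|
      choose_two_le_ncard_of_forall_ne_zero _ fun i => ?_
    simp only [Fintype.linearCombination_apply_single, coweight, if_neg hk, smul_eq_mul, one_mul]
    split_ifs <;> norm_num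

end TypeD

open TypeD in
/-- In the root system of type `D_n` (`n ≥ 4`), the minimum over simple roots `α_k` of the
resonant codimension of `Π \ {α_k}` equals `2n - 2`. -/
theorem stmt10 (n : ℕ) (hn : 4 ≤ n) :
    let e : Fin n → (Fin n → ℝ) := fun i => Pi.single i 1
    let Sp : Set (Fin n → ℝ) :=
      {v | ∃ i j : Fin n, i < j ∧ (v = e i - e j ∨ v = e i + e j)}
    let α : Fin n → (Fin n → ℝ) := fun k =>
      if h : (k : ℕ) + 1 < n then e k - e ⟨(k : ℕ) + 1, h⟩
      else e ⟨n - 2, by omega⟩ + e ⟨n - 1, by omega⟩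
    let rc : Set (Fin n → ℝ) → ℕ := fun Pi' =>
      Set.ncard {v | v ∈ Sp ∧ v ∉ Submodule.span ℝ Pi'}
    (⨅ k : Fin n, rc (Set.range α \ {α k})) = 2 * n - 2 := by
  show ⨅ k, resonantCodim ℝ (posRoots n) (Set.range simpleRoot \ {simpleRoot k}) = 2 * n - 2
  have : Nonempty (Fin n) := ⟨⟨0, by omega⟩⟩
  exact le_antisymm
    ((ciInf_le (OrderBot.bddBelow _) _).trans (resonantCodim_simpleRoot_zero_le (by omega)))
    (le_ciInf (two_mul_sub_two_le_resonantCodim hn))
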